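/- In the two-user noiseless binary adder channel with a common [n,k] binary linear code C (k ≥ 2), the per-user error probability of the ML (list) decoder satisfies P_e ≥ (1/2)·(1 − n/(2k − 2)). Consequently, any sequence of linear codes with vanishing P_e has symmetric rate k/n ≤ 1/2 asymptotically. -/

import Mathlib

open scoped Classical

set_option maxHeartbeats 1000000

def GoodP (n : ℕ) (C : Submodule (ZMod 2) (Fin n → ZMod 2)) (s : C) : Prop :=
  ∀ c : C, (∀ i, (s : Fin n → ZMod 2) i = 0 → (c : Fin n → ZMod 2) i = 0) → c = 0 ∨ c = s

noncomputable def cselF (n : ℕ) (C : Submodule (ZMod 2) (Fin n → ZMod 2)) (s : C) : C :=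
  if h : ∃ c : C, c ≠ 0 ∧ c ≠ s ∧ ∀ i, (s : Fin n → ZMod 2) i = 0 → (c : Fin n → ZMod 2) i = 0
  then h.choose else 0

lemma self_add_self {V : Type*} [AddCommGroup V] [Module (ZMod 2) V] (a : V) : a + a = 0 := by
  have := two_smul (ZMod 2) a
  simpa [show (2 : ZMod 2) = 0 by decide] using this.symm

lemma cselF_spec (n : ℕ) (C : Submodule (ZMod 2) (Fin n → ZMod 2)) (s : C)
    (hns : ¬ GoodP n C s) :
    cselF n C s ≠ 0 ∧ cselF n C s ≠ s ∧
      ∀ i, (s : Fin n → ZMod 2) i = 0 → ((cselF n C s : C) : Fin n → ZMod 2) i = 0 := by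
  unfold GoodP at hns
  push_neg at hns
  obtain ⟨c, h1, h2, h3⟩ := hns
  have hex : ∃ c : C, c ≠ 0 ∧ c ≠ s ∧
      ∀ i, (s : Fin n → ZMod 2) i = 0 → (c : Fin n → ZMod 2) i = 0 := ⟨c, h2, h3, h1⟩
  rw [cselF, dif_pos hex]
  exact hex.choose_spec

lemma good_zero (n : ℕ) (C : Submodule (ZMod 2) (Fin n → ZMod 2)) : GoodP n C 0 := by
  intro c hc
  left
  apply Subtype.ext
  funext i
  simpa using hc i (by simp)

lemma four_points {V : Type*} [DecidableEq V] (x1 x2 y1 y2 a b : V)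
    (h12 : x1 ≠ x2) (h13 : x1 ≠ y1) (h14 : x1 ≠ y2)
    (h23 : x2 ≠ y1) (h24 : x2 ≠ y2) (h34 : y1 ≠ y2) :
    2 ≤ ((if (x1 ≠ a ∧ x1 ≠ b) then 1 else 0) + (if (x2 ≠ a ∧ x2 ≠ b) then 1 else 0))
      + ((if (y1 ≠ a ∧ y1 ≠ b) then 1 else 0) + (if (y2 ≠ a ∧ y2 ≠ b) then 1 else 0)) := by
  have hkey : ∀ u v w : V, u ≠ v → u ≠ w → v ≠ w →
      (u = a ∨ u = b) → (v = a ∨ v = b) → (w = a ∨ w = b) → False := by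
    intro u v w huv huw hvw hu hv hw
    rcases hu with rfl | rfl <;> rcases hv with hv | hv <;> rcases hw with hw | hw <;> simp_all
  have hiff : ∀ x : V, (x ≠ a ∧ x ≠ b) ↔ ¬(x = a ∨ x = b) := fun x => by tauto
  simp only [hiff]
  by_cases e1 : x1 = a ∨ x1 = b <;> by_cases e2 : x2 = a ∨ x2 = b <;>
    by_cases e3 : y1 = a ∨ y1 = b <;> by_cases e4 : y2 = a ∨ y2 = b <;>
    simp only [e1, e2, e3, e4, not_true, not_false_iff, if_true, if_false,
      ite_true, ite_false, not_false_eq_true, not_true_eq_false] <;>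
    first
      | omega
      | (exfalso
         first
           | exact hkey x1 x2 y1 h12 h13 h23 e1 e2 e3
           | exact hkey x1 x2 y2 h12 h14 h24 e1 e2 e4
           | exact hkey x1 y1 y2 h13 h14 h34 e1 e3 e4
           | exact hkey x2 y1 y2 h23 h24 h34 e2 e3 e4)

lemma rank_lemma (n k : ℕ) (C : Submodule (ZMod 2) (Fin n → ZMod 2))
    (hdim : Module.finrank (ZMod 2) C = k) (s : C) (hgood : GoodP n C s) :
    k ≤ (Finset.univ.filter (fun i : Fin n =>
        (s : Fin n → ZMod 2) i = 0 ∧ ∃ c : C, (c : Fin n → ZMod 2) i ≠ 0)).card + 1 := by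
  classical
  set T := Finset.univ.filter (fun i : Fin n =>
      (s : Fin n → ZMod 2) i = 0 ∧ ∃ c : C, (c : Fin n → ZMod 2) i ≠ 0) with hT
  let π : C →ₗ[ZMod 2] (↥T → ZMod 2) :=
    LinearMap.pi (fun j => (LinearMap.proj (j : Fin n)).comp C.subtype)
  have hker : LinearMap.ker π ≤ Submodule.span (ZMod 2) {s} := by
    intro c hc
    have hc' : ∀ j : ↥T, (c : Fin n → ZMod 2) (j : Fin n) = 0 := by
      intro j
      have := congrFun (LinearMap.mem_ker.mp hc) j
      simpa [π] using this
    have hsupp : ∀ i, (s : Fin n → ZMod 2) i = 0 → (c : Fin n → ZMod 2) i = 0 := by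
      intro i hi
      by_cases hex : ∃ c' : C, (c' : Fin n → ZMod 2) i ≠ 0
      · obtain ⟨c', hcne⟩ := hex
        have hmem : i ∈ T := by
          rw [hT, Finset.mem_filter]
          exact ⟨Finset.mem_univ i, hi, ⟨c', hcne⟩⟩
        exact hc' ⟨i, hmem⟩
      · push_neg at hex
        exact hex c
    rcases hgood c hsupp with h | h
    · simp [h]
    · rw [h]; exact Submodule.mem_span_singleton_self s
  have hrk : Module.finrank (ZMod 2) (LinearMap.ker π) ≤ 1 := by
    refine le_trans (Submodule.finrank_mono hker) ?_
    by_cases h : s = 0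
    · subst h; rw [Submodule.span_zero_singleton]; simp
    · rw [finrank_span_singleton h]
  have hrange : Module.finrank (ZMod 2) (LinearMap.range π) ≤ T.card := by
    refine le_trans (Submodule.finrank_le _) ?_
    rw [Module.finrank_pi, Fintype.card_coe]
  have := LinearMap.finrank_range_add_finrank_ker π
  omega

lemma half_lemma (n : ℕ) (C : Submodule (ZMod 2) (Fin n → ZMod 2)) (i : Fin n)
    (t : C) (ht : (t : Fin n → ZMod 2) i ≠ 0) :
    2 * (Finset.univ.filter fun s : C => (s : Fin n → ZMod 2) i = 0).card
      = Fintype.card C := by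
  classical
  have hflip : ∀ a b : ZMod 2, b ≠ 0 → (a = 0 ↔ ¬ (a + b = 0)) := by decide
  have h2t : ∀ s : C, s + t + t = s := by
    intro s
    rw [add_assoc, self_add_self, add_zero]
  have hcards : (Finset.univ.filter fun s : C => (s : Fin n → ZMod 2) i = 0).card
      = (Finset.univ.filter fun s : C => ¬ (s : Fin n → ZMod 2) i = 0).card := by
    apply Finset.card_nbij' (fun s => s + t) (fun s => s + t)
    · intro s hs
      simp only [Finset.mem_coe, Finset.mem_filter, Finset.mem_univ, true_and] at hs ⊢
      have he : ((s + t : C) : Fin n → ZMod 2) i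
          = (s : Fin n → ZMod 2) i + (t : Fin n → ZMod 2) i := rfl
      rw [he]
      exact ((hflip _ _ ht).mp hs)
    · intro s hs
      simp only [Finset.mem_coe, Finset.mem_filter, Finset.mem_univ, true_and] at hs ⊢
      have he : ((s + t : C) : Fin n → ZMod 2) i
          = (s : Fin n → ZMod 2) i + (t : Fin n → ZMod 2) i := rfl
      rw [he]
      revert hs ht
      generalize (s : Fin n → ZMod 2) i = a
      generalize (t : Fin n → ZMod 2) i = b
      revert a b; decide
    · intro s _; exact h2t s
    · intro s _; exact h2t s
  have := Finset.card_filter_add_card_filter_not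
    (s := (Finset.univ : Finset C)) (fun s : C => (s : Fin n → ZMod 2) i = 0)
  rw [Finset.card_univ] at this
  omega

/-- Converse for the two-user noiseless binary adder channel with a common binary linear
code.  Both users pick a uniform random codeword from the same `[n, k]` binary linear
code `C` (with `k ≥ 2`); the channel outputs the coordinatewise integer sum.  For any
decoder `dec` producing an (ordered representation of an) unordered pair of codewords,
the per-user error probability — a user errs when its codeword is not in the output
pair — satisfies `P_e ≥ (1/2)·(1 − n/(2k − 2))`; in particular this holds for the ML
list decoder.  Consequently, linear codes with vanishing `P_e` must have symmetric rate
`k/n ≤ 1/2` asymptotically. -/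
theorem two_user_bac_linear_converse (n k : ℕ) (hk : 2 ≤ k)
    (C : Submodule (ZMod 2) (Fin n → ZMod 2))
    (hdim : Module.finrank (ZMod 2) C = k)
    (dec : (Fin n → ℕ) → (Fin n → ZMod 2) × (Fin n → ZMod 2)) :
    (1 / 2) * (1 - (n : ℝ) / (2 * (k : ℝ) - 2)) ≤
      (((Finset.univ.filter fun p : C × C =>
            (p.1 : Fin n → ZMod 2) ≠
              (dec fun i => ((p.1 : Fin n → ZMod 2) i).val +
                ((p.2 : Fin n → ZMod 2) i).val).1 ∧
            (p.1 : Fin n → ZMod 2) ≠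
              (dec fun i => ((p.1 : Fin n → ZMod 2) i).val +
                ((p.2 : Fin n → ZMod 2) i).val).2).card : ℝ)
        + ((Finset.univ.filter fun p : C × C =>
            (p.2 : Fin n → ZMod 2) ≠
              (dec fun i => ((p.1 : Fin n → ZMod 2) i).val +
                ((p.2 : Fin n → ZMod 2) i).val).1 ∧
            (p.2 : Fin n → ZMod 2) ≠
              (dec fun i => ((p.1 : Fin n → ZMod 2) i).val +
                ((p.2 : Fin n → ZMod 2) i).val).2).card : ℝ)) /
      (2 * ((Nat.card C : ℝ)) ^ 2) := by
  classical
  set M := Nat.card C with hMdef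
  -- the error-counting function
  set g : C × C → ℕ := fun p =>
      (if ((p.1 : Fin n → ZMod 2) ≠
              (dec fun i => ((p.1 : Fin n → ZMod 2) i).val +
                ((p.2 : Fin n → ZMod 2) i).val).1 ∧
            (p.1 : Fin n → ZMod 2) ≠
              (dec fun i => ((p.1 : Fin n → ZMod 2) i).val +
                ((p.2 : Fin n → ZMod 2) i).val).2)
        then 1 else 0)
      + (if ((p.2 : Fin n → ZMod 2) ≠
              (dec fun i => ((p.1 : Fin n → ZMod 2) i).val +
                ((p.2 : Fin n → ZMod 2) i).val).1 ∧
            (p.2 : Fin n → ZMod 2) ≠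
              (dec fun i => ((p.1 : Fin n → ZMod 2) i).val +
                ((p.2 : Fin n → ZMod 2) i).val).2)
        then 1 else 0) with hg
  set σ : C × C → C × C := fun p =>
      (p.1 + cselF n C (p.1 + p.2), p.2 + cselF n C (p.1 + p.2)) with hσ
  set Bc : Finset (C × C) := Finset.univ.filter (fun p => ¬ GoodP n C (p.1 + p.2)) with hBc
  set BG : Finset (C × C) := Finset.univ.filter (fun p => GoodP n C (p.1 + p.2)) with hBG
  set G : ℕ := (Finset.univ.filter (fun s : C => GoodP n C s)).card with hG
  have hMcard : Fintype.card C = M := (Nat.card_eq_fintype_card).symm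
  have hM0 : 0 < M := Nat.card_pos
  -- σ preserves the sum and is an involution
  have hsum : ∀ p : C × C, (σ p).1 + (σ p).2 = p.1 + p.2 := by
    intro p
    show (p.1 + cselF n C (p.1 + p.2)) + (p.2 + cselF n C (p.1 + p.2)) = p.1 + p.2
    rw [add_add_add_comm, self_add_self, add_zero]
  have hσσ : ∀ p : C × C, σ (σ p) = p := by
    intro p
    have h := hsum p
    show ((σ p).1 + cselF n C ((σ p).1 + (σ p).2),
          (σ p).2 + cselF n C ((σ p).1 + (σ p).2)) = p
    rw [h]
    show (p.1 + cselF n C (p.1 + p.2) + cselF n C (p.1 + p.2),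
          p.2 + cselF n C (p.1 + p.2) + cselF n C (p.1 + p.2)) = p
    rw [add_assoc, self_add_self, add_zero, add_assoc, self_add_self, add_zero]
  have hσmem : ∀ p ∈ Bc, σ p ∈ Bc := by
    intro p hp
    rw [hBc, Finset.mem_filter] at hp ⊢
    refine ⟨Finset.mem_univ _, ?_⟩
    rw [hsum p]
    exact hp.2
  -- the core bound
  have hcore : ∀ p ∈ Bc, 2 ≤ g p + g (σ p) := by
    intro p hp
    have hnp : ¬ GoodP n C (p.1 + p.2) := (Finset.mem_filter.mp hp).2
    obtain ⟨hc0, hcs, hcsupp⟩ := cselF_spec n C (p.1 + p.2) hnp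
    have hs0 : p.1 + p.2 ≠ 0 := fun h => hnp (h ▸ good_zero n C)
    have hval : ∀ a b e : ZMod 2, (e ≠ 0 → a + b ≠ 0) →
        (a + e).val + (b + e).val = a.val + b.val := by decide
    have hyeq : (fun i => (((p.1 + cselF n C (p.1 + p.2) : C) : Fin n → ZMod 2) i).val +
          (((p.2 + cselF n C (p.1 + p.2) : C) : Fin n → ZMod 2) i).val)
        = (fun i => ((p.1 : Fin n → ZMod 2) i).val + ((p.2 : Fin n → ZMod 2) i).val) := by
      funext i
      have h1 : ((p.1 + cselF n C (p.1 + p.2) : C) : Fin n → ZMod 2) i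
          = (p.1 : Fin n → ZMod 2) i + ((cselF n C (p.1 + p.2) : C) : Fin n → ZMod 2) i := rfl
      have h2 : ((p.2 + cselF n C (p.1 + p.2) : C) : Fin n → ZMod 2) i
          = (p.2 : Fin n → ZMod 2) i + ((cselF n C (p.1 + p.2) : C) : Fin n → ZMod 2) i := rfl
      rw [h1, h2]
      apply hval
      intro he habs
      exact he (hcsupp i habs)
    -- distinctness in C
    have d12 : p.1 ≠ p.2 := by
      intro h
      exact hs0 (by rw [h]; exact self_add_self _)
    have d13 : p.1 ≠ p.1 + cselF n C (p.1 + p.2) := by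
      intro h
      apply hc0
      have := (left_eq_add).mp h
      exact this
    have d24 : p.2 ≠ p.2 + cselF n C (p.1 + p.2) := by
      intro h
      apply hc0
      exact (left_eq_add).mp h
    have d14 : p.1 ≠ p.2 + cselF n C (p.1 + p.2) := by
      intro h
      apply hcs
      have : p.2 + p.1 = p.2 + (p.2 + cselF n C (p.1 + p.2)) := by rw [← h]
      rw [← add_assoc, self_add_self, zero_add] at this
      rw [← this, add_comm]
    have d23 : p.2 ≠ p.1 + cselF n C (p.1 + p.2) := by
      intro h
      apply hcs
      have : p.1 + p.2 = p.1 + (p.1 + cselF n C (p.1 + p.2)) := by rw [← h]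
      rw [← add_assoc, self_add_self, zero_add] at this
      exact this.symm
    have d34 : p.1 + cselF n C (p.1 + p.2) ≠ p.2 + cselF n C (p.1 + p.2) := by
      intro h
      exact d12 (add_right_cancel h)
    have coe_ne : ∀ {x y : C}, x ≠ y → (x : Fin n → ZMod 2) ≠ (y : Fin n → ZMod 2) :=
      fun h => Subtype.coe_injective.ne h
    -- unfold and conclude
    show 2 ≤
      ((if ((p.1 : Fin n → ZMod 2) ≠
              (dec fun i => ((p.1 : Fin n → ZMod 2) i).val +
                ((p.2 : Fin n → ZMod 2) i).val).1 ∧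
            (p.1 : Fin n → ZMod 2) ≠
              (dec fun i => ((p.1 : Fin n → ZMod 2) i).val +
                ((p.2 : Fin n → ZMod 2) i).val).2)
        then 1 else 0)
      + (if ((p.2 : Fin n → ZMod 2) ≠
              (dec fun i => ((p.1 : Fin n → ZMod 2) i).val +
                ((p.2 : Fin n → ZMod 2) i).val).1 ∧
            (p.2 : Fin n → ZMod 2) ≠
              (dec fun i => ((p.1 : Fin n → ZMod 2) i).val +
                ((p.2 : Fin n → ZMod 2) i).val).2)
        then 1 else 0))
      + ((if (((p.1 + cselF n C (p.1 + p.2) : C) : Fin n → ZMod 2) ≠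
              (dec fun i => (((p.1 + cselF n C (p.1 + p.2) : C) : Fin n → ZMod 2) i).val +
                (((p.2 + cselF n C (p.1 + p.2) : C) : Fin n → ZMod 2) i).val).1 ∧
            ((p.1 + cselF n C (p.1 + p.2) : C) : Fin n → ZMod 2) ≠
              (dec fun i => (((p.1 + cselF n C (p.1 + p.2) : C) : Fin n → ZMod 2) i).val +
                (((p.2 + cselF n C (p.1 + p.2) : C) : Fin n → ZMod 2) i).val).2)
        then 1 else 0)
      + (if (((p.2 + cselF n C (p.1 + p.2) : C) : Fin n → ZMod 2) ≠
              (dec fun i => (((p.1 + cselF n C (p.1 + p.2) : C) : Fin n → ZMod 2) i).val +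
                (((p.2 + cselF n C (p.1 + p.2) : C) : Fin n → ZMod 2) i).val).1 ∧
            ((p.2 + cselF n C (p.1 + p.2) : C) : Fin n → ZMod 2) ≠
              (dec fun i => (((p.1 + cselF n C (p.1 + p.2) : C) : Fin n → ZMod 2) i).val +
                (((p.2 + cselF n C (p.1 + p.2) : C) : Fin n → ZMod 2) i).val).2)
        then 1 else 0))
    rw [hyeq]
    exact four_points _ _ _ _ _ _ (coe_ne d12) (coe_ne d13) (coe_ne d14)
      (coe_ne d23) (coe_ne d24) (coe_ne d34)
  -- sum over the bad set via the involution
  have hsum_inv : ∑ p ∈ Bc, g (σ p) = ∑ p ∈ Bc, g p :=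
    Finset.sum_nbij' σ σ hσmem hσmem (fun p _ => hσσ p) (fun p _ => hσσ p) (fun p _ => rfl)
  have hBc_le : Bc.card ≤ ∑ p : C × C, g p := by
    have h1 : ∑ p ∈ Bc, 2 ≤ ∑ p ∈ Bc, (g p + g (σ p)) := Finset.sum_le_sum hcore
    rw [Finset.sum_add_distrib, hsum_inv, Finset.sum_const, smul_eq_mul] at h1
    have h2 : ∑ p ∈ Bc, g p ≤ ∑ p : C × C, g p :=
      Finset.sum_le_sum_of_subset (Finset.filter_subset _ _)
    omega
  -- counting the good set
  have hB : BG.card = M * G := by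
    have hb : BG.card = ((Finset.univ : Finset C) ×ˢ (Finset.univ.filter fun s : C => GoodP n C s)).card := by
      apply Finset.card_nbij' (fun p => (p.1, p.1 + p.2)) (fun q => (q.1, q.1 + q.2))
      · intro p hp
        rw [hBG, Finset.mem_coe, Finset.mem_filter] at hp
        rw [Finset.mem_coe, Finset.mem_product, Finset.mem_filter]
        exact ⟨Finset.mem_univ _, Finset.mem_univ _, hp.2⟩
      · intro q hq
        rw [Finset.mem_coe, Finset.mem_product, Finset.mem_filter] at hq
        rw [hBG, Finset.mem_coe, Finset.mem_filter]
        refine ⟨Finset.mem_univ _, ?_⟩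
        have h : q.1 + (q.1 + q.2) = q.2 := by rw [← add_assoc, self_add_self, zero_add]
        show GoodP n C (q.1 + (q.1 + q.2))
        rw [h]
        exact hq.2.2
      · intro p _
        show (p.1, p.1 + (p.1 + p.2)) = p
        rw [show p.1 + (p.1 + p.2) = p.2 from by rw [← add_assoc, self_add_self, zero_add]]
      · intro q _
        show (q.1, q.1 + (q.1 + q.2)) = q
        rw [show q.1 + (q.1 + q.2) = q.2 from by rw [← add_assoc, self_add_self, zero_add]]
    rw [hb, Finset.card_product, Finset.card_univ, hMcard, hG]
  have hsplit : BG.card + Bc.card = M * M := by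
    have h := Finset.card_filter_add_card_filter_not
      (s := (Finset.univ : Finset (C × C))) (fun p : C × C => GoodP n C (p.1 + p.2))
    rw [Finset.card_univ, Fintype.card_prod, hMcard] at h
    rw [hBG, hBc]
    convert h using 2
  -- Markov bound on the number of good sums
  obtain ⟨k', hkk⟩ : ∃ k', k = k' + 1 := ⟨k - 1, by omega⟩
  have hk1 : 1 ≤ k' := by omega
  have hMarkov : 2 * (k' * G) ≤ n * M := by
    set N0 : C → ℕ := fun s => (Finset.univ.filter (fun i : Fin n =>
        (s : Fin n → ZMod 2) i = 0 ∧ ∃ c : C, (c : Fin n → ZMod 2) i ≠ 0)).card with hN0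
    have h1 : k' * G ≤ ∑ s : C, N0 s := by
      have h2 : ∀ s ∈ Finset.univ.filter (fun s : C => GoodP n C s), k' ≤ N0 s := by
        intro s hs
        have := rank_lemma n k C hdim s (Finset.mem_filter.mp hs).2
        simp only [hN0]
        omega
      have h3 := Finset.card_nsmul_le_sum _ N0 k' h2
      rw [smul_eq_mul] at h3
      calc k' * G = G * k' := mul_comm _ _
        _ ≤ ∑ s ∈ Finset.univ.filter (fun s : C => GoodP n C s), N0 s := by rw [hG]; exact h3
        _ ≤ ∑ s : C, N0 s := Finset.sum_le_sum_of_subset (Finset.filter_subset _ _)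
    have h4 : 2 * ∑ s : C, N0 s ≤ n * M := by
      have hswap : ∑ s : C, N0 s = ∑ i : Fin n, (Finset.univ.filter (fun s : C =>
          (s : Fin n → ZMod 2) i = 0 ∧ ∃ c : C, (c : Fin n → ZMod 2) i ≠ 0)).card := by
        simp only [hN0, Finset.card_filter]
        exact Finset.sum_comm
      have hper : ∀ i : Fin n, 2 * (Finset.univ.filter (fun s : C =>
          (s : Fin n → ZMod 2) i = 0 ∧ ∃ c : C, (c : Fin n → ZMod 2) i ≠ 0)).card ≤ M := by
        intro i
        by_cases hex : ∃ c : C, (c : Fin n → ZMod 2) i ≠ 0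
        · have heq : Finset.univ.filter (fun s : C =>
              (s : Fin n → ZMod 2) i = 0 ∧ ∃ c : C, (c : Fin n → ZMod 2) i ≠ 0)
              = Finset.univ.filter (fun s : C => (s : Fin n → ZMod 2) i = 0) := by
            apply Finset.filter_congr
            intro s _
            simp [hex]
          rw [heq]
          obtain ⟨t, ht⟩ := hex
          rw [half_lemma n C i t ht, hMcard]
        · have heq : Finset.univ.filter (fun s : C =>
              (s : Fin n → ZMod 2) i = 0 ∧ ∃ c : C, (c : Fin n → ZMod 2) i ≠ 0)
              = ∅ := by
            apply Finset.filter_false_of_mem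
            intro s _ hcon
            exact hex hcon.2
          rw [heq]
          simp
      calc 2 * ∑ s : C, N0 s
          = ∑ i : Fin n, 2 * (Finset.univ.filter (fun s : C =>
              (s : Fin n → ZMod 2) i = 0 ∧ ∃ c : C, (c : Fin n → ZMod 2) i ≠ 0)).card := by
            rw [hswap, Finset.mul_sum]
        _ ≤ ∑ _i : Fin n, M := Finset.sum_le_sum (fun i _ => hper i)
        _ = n * M := by rw [Finset.sum_const, Finset.card_univ, Fintype.card_fin, smul_eq_mul]
    calc 2 * (k' * G) ≤ 2 * ∑ s : C, N0 s := by omega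
      _ ≤ n * M := h4
  -- put everything together over the reals
  have hEg : ∑ p : C × C, g p =
      (Finset.univ.filter fun p : C × C =>
            (p.1 : Fin n → ZMod 2) ≠
              (dec fun i => ((p.1 : Fin n → ZMod 2) i).val +
                ((p.2 : Fin n → ZMod 2) i).val).1 ∧
            (p.1 : Fin n → ZMod 2) ≠
              (dec fun i => ((p.1 : Fin n → ZMod 2) i).val +
                ((p.2 : Fin n → ZMod 2) i).val).2).card
        + (Finset.univ.filter fun p : C × C =>
            (p.2 : Fin n → ZMod 2) ≠
              (dec fun i => ((p.1 : Fin n → ZMod 2) i).val +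
                ((p.2 : Fin n → ZMod 2) i).val).1 ∧
            (p.2 : Fin n → ZMod 2) ≠
              (dec fun i => ((p.1 : Fin n → ZMod 2) i).val +
                ((p.2 : Fin n → ZMod 2) i).val).2).card := by
    rw [Finset.card_filter, Finset.card_filter, ← Finset.sum_add_distrib]
  have hcount : Bc.card ≤
      (Finset.univ.filter fun p : C × C =>
            (p.1 : Fin n → ZMod 2) ≠
              (dec fun i => ((p.1 : Fin n → ZMod 2) i).val +
                ((p.2 : Fin n → ZMod 2) i).val).1 ∧
            (p.1 : Fin n → ZMod 2) ≠
              (dec fun i => ((p.1 : Fin n → ZMod 2) i).val +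
                ((p.2 : Fin n → ZMod 2) i).val).2).card
        + (Finset.univ.filter fun p : C × C =>
            (p.2 : Fin n → ZMod 2) ≠
              (dec fun i => ((p.1 : Fin n → ZMod 2) i).val +
                ((p.2 : Fin n → ZMod 2) i).val).1 ∧
            (p.2 : Fin n → ZMod 2) ≠
              (dec fun i => ((p.1 : Fin n → ZMod 2) i).val +
                ((p.2 : Fin n → ZMod 2) i).val).2).card := by
    rw [← hEg]
    exact hBc_le
  have hD : (0:ℝ) < 2 * (k:ℝ) - 2 := by
    have h2 : (2:ℝ) ≤ (k:ℝ) := by exact_mod_cast hk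
    linarith
  have hMR : (0:ℝ) < (M:ℝ) := by exact_mod_cast hM0
  have hBcR : ((Bc.card : ℝ)) = (M:ℝ) * M - (M:ℝ) * G := by
    have h := hsplit
    rw [hB] at h
    have h2 : ((M:ℝ) * G + Bc.card) = (M:ℝ) * M := by exact_mod_cast h
    linarith
  have hMarkR : (2:ℝ) * ((k':ℝ) * G) ≤ (n:ℝ) * M := by exact_mod_cast hMarkov
  have hkR : (k:ℝ) = (k':ℝ) + 1 := by exact_mod_cast hkk
  have hcountR : (M:ℝ) * M - (M:ℝ) * G ≤
      ((Finset.univ.filter fun p : C × C =>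
            (p.1 : Fin n → ZMod 2) ≠
              (dec fun i => ((p.1 : Fin n → ZMod 2) i).val +
                ((p.2 : Fin n → ZMod 2) i).val).1 ∧
            (p.1 : Fin n → ZMod 2) ≠
              (dec fun i => ((p.1 : Fin n → ZMod 2) i).val +
                ((p.2 : Fin n → ZMod 2) i).val).2).card : ℝ)
        + ((Finset.univ.filter fun p : C × C =>
            (p.2 : Fin n → ZMod 2) ≠
              (dec fun i => ((p.1 : Fin n → ZMod 2) i).val +
                ((p.2 : Fin n → ZMod 2) i).val).1 ∧
            (p.2 : Fin n → ZMod 2) ≠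
              (dec fun i => ((p.1 : Fin n → ZMod 2) i).val +
                ((p.2 : Fin n → ZMod 2) i).val).2).card : ℝ) := by
    rw [← hBcR]
    exact_mod_cast hcount
  rw [le_div_iff₀ (by positivity : (0:ℝ) < 2 * ((M:ℝ))^2)]
  have hexp : (1:ℝ)/2 * (1 - (n:ℝ)/(2*(k:ℝ)-2)) * (2*((M:ℝ))^2)
      = (M:ℝ)*M - ((M:ℝ)*M) * ((n:ℝ)/(2*(k:ℝ)-2)) := by ring
  rw [hexp]
  have hGM : ((G:ℝ)) * (2*(k:ℝ)-2) ≤ (n:ℝ) * M := by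
    rw [hkR]
    nlinarith [hMarkR]
  have hfrac : (M:ℝ) * G ≤ ((M:ℝ)*M) * ((n:ℝ)/(2*(k:ℝ)-2)) := by
    rw [mul_div_assoc']
    rw [le_div_iff₀ hD]
    nlinarith [hGM, hMR.le]
  linarith [hcountR, hfrac]
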